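/- Let m ∈ ℕ₀. Suppose S and H are bounded linear operators on the complex Hilbert space ℓ²(ℕ₀) whose matrix entries with respect to the standard orthonormal basis (e_n) are ⟨S e_k, e_n⟩ = c_{k+n+2m+2} and ⟨H e_k, e_n⟩ = 1/(k+n+m+3/2) for all k, n ∈ ℕ₀, where c_j = (2/(π j))·sin(π j/2) for integers j ≥ 1. Then there exists a unitary operator (linear isometric equivalence) U from ℓ²(ℕ₀) onto ℓ²(ℕ₀) × ℓ²(ℕ₀) such that for every x ∈ ℓ²(ℕ₀): U(S x) = ( ((−1)^{m+1}/π)·H((U x)₁), ((−1)^m/π)·H((U x)₂) ). -/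

import Mathlib

open MeasureTheory

/-- The Fourier coefficients `c_j = (2/(π j))·sin(π j/2)`. -/
noncomputable def cCoef (j : ℕ) : ℝ := (2 / (Real.pi * j)) * Real.sin (Real.pi * j / 2)

/-- The Hilbert space `ℓ²(ℕ₀)` of square-summable complex sequences. -/
noncomputable abbrev l2 := lp (fun _ : ℕ => ℂ) 2

/-- The standard orthonormal basis vectors of `ℓ²(ℕ₀)`. -/
noncomputable def e (n : ℕ) : l2 := lp.single 2 n (1 : ℂ)

/-!
Split the standard basis into the even vectors `e (2a)` and the odd vectors `e (2a+1)`. As `c_j`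
vanishes for even `j` and `c_{2t+1} = (-1)^t / (π (t + 1/2))`, the matrix of `S` couples only
indices of opposite parity, the entry between `2a` and `2b+1` (in either order) being
`(-1)^(a+b+m+1) h_{ab} / π`, where `h_{ab} = 1 / (a + b + m + 3/2)` is the matrix of `H`.
The vectors `(-1)^a (e a, ± e a) / √2` form a Hilbert basis of `ℓ² ⊕ ℓ²` in which
`diag (-c H, c H)`, `c = (-1)^m / π`, has the same matrix: between two `+` (or two `-`) vectors
it is `(-1)^(a+b) (-c + c) h_{ab} / 2 = 0`, between a `+` and a `-` vector it is
`(-1)^(a+b) (-c - c) h_{ab} / 2`. Operators with the same matrix in two Hilbert bases are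
intertwined by the unitary carrying one basis to the other.
-/

open scoped InnerProductSpace

namespace ContinuousLinearMap

variable (p : ENNReal) {R E E' F F' : Type*} [Semiring R]
  [AddCommGroup E] [Module R E] [TopologicalSpace E]
  [AddCommGroup E'] [Module R E'] [TopologicalSpace E']
  [AddCommGroup F] [Module R F] [TopologicalSpace F]
  [AddCommGroup F'] [Module R F'] [TopologicalSpace F']

noncomputable def withLpProdMap (f : E →L[R] E') (g : F →L[R] F') :
    WithLp p (E × F) →L[R] WithLp p (E' × F') :=
  (WithLp.prodContinuousLinearEquiv p R E' F').symm.toContinuousLinearMap ∘L f.prodMap g ∘L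
    (WithLp.prodContinuousLinearEquiv p R E F).toContinuousLinearMap

@[simp]
theorem withLpProdMap_apply (f : E →L[R] E') (g : F →L[R] F') (x : WithLp p (E × F)) :
    withLpProdMap p f g x = WithLp.toLp p (f x.fst, g x.snd) :=
  rfl

end ContinuousLinearMap

namespace HilbertBasis

variable {ι 𝕜 E F : Type*} [RCLike 𝕜] [NormedAddCommGroup E] [InnerProductSpace 𝕜 E]
  [NormedAddCommGroup F] [InnerProductSpace 𝕜 F]

section Reindex

variable {ι' : Type*} [CompleteSpace E]

noncomputable def reindex (b : HilbertBasis ι 𝕜 E) (σ : ι ≃ ι') : HilbertBasis ι' 𝕜 E :=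
  HilbertBasis.mk (b.orthonormal.comp _ σ.symm.injective)
    (by rw [σ.symm.surjective.range_comp, b.dense_span])

@[simp]
theorem coe_reindex (b : HilbertBasis ι 𝕜 E) (σ : ι ≃ ι') : ⇑(b.reindex σ) = b ∘ σ.symm :=
  HilbertBasis.coe_mk _ _

end Reindex

theorem repr_trans_repr_symm_apply_self (b : HilbertBasis ι 𝕜 E) (b' : HilbertBasis ι 𝕜 F)
    (i : ι) :
    b.repr.trans b'.repr.symm (b i) = b' i := by
  classical
  simp [HilbertBasis.repr_self]

theorem repr_trans_repr_symm_map_apply (b : HilbertBasis ι 𝕜 E) (b' : HilbertBasis ι 𝕜 F)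
    {A : E →L[𝕜] E} {B : F →L[𝕜] F} (h : ∀ i j, ⟪b i, A (b j)⟫_𝕜 = ⟪b' i, B (b' j)⟫_𝕜) (x : E) :
    b.repr.trans b'.repr.symm (A x) = B (b.repr.trans b'.repr.symm x) := by
  set U := b.repr.trans b'.repr.symm
  suffices (U : E →L[𝕜] F) ∘L A = B ∘L (U : E →L[𝕜] F) from DFunLike.congr_fun this x
  refine ContinuousLinearMap.ext_on
    (Submodule.dense_iff_topologicalClosure_eq_top.mpr b.dense_span) ?_
  rintro _ ⟨j, rfl⟩
  refine b'.repr.injective (lp.ext (funext fun i => ?_))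
  change b'.repr (b'.repr.symm (b.repr (A (b j)))) i = b'.repr (B (U (b j))) i
  rw [repr_trans_repr_symm_apply_self, LinearIsometryEquiv.apply_symm_apply, b.repr_apply_apply,
    b'.repr_apply_apply, h]

end HilbertBasis

theorem cCoef_two_mul (t : ℕ) : cCoef (2 * t) = 0 := by
  rw [cCoef, show Real.pi * (2 * t : ℕ) / 2 = t * Real.pi by push_cast; ring, Real.sin_nat_mul_pi,
    mul_zero]

theorem cCoef_two_mul_add_one (t : ℕ) :
    cCoef (2 * t + 1) = (-1) ^ t / Real.pi / (t + 1 / 2) := by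
  have hsin : Real.sin (Real.pi * (2 * t + 1 : ℕ) / 2) = (-1) ^ t := by
    rw [show Real.pi * (2 * t + 1 : ℕ) / 2 = Real.pi / 2 + t * Real.pi by push_cast; ring,
      Real.sin_add_nat_mul_pi, Real.sin_pi_div_two, mul_one]
  rw [cCoef, hsin]
  push_cast
  field_simp

noncomputable def stdBasis : HilbertBasis ℕ ℂ l2 :=
  HilbertBasis.ofRepr (LinearIsometryEquiv.refl ℂ l2)

theorem coe_stdBasis : ⇑stdBasis = e :=
  funext fun n => (stdBasis.repr_symm_single n).symm

theorem inner_e_e (a b : ℕ) : ⟪e a, e b⟫_ℂ = if a = b then 1 else 0 := by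
  rw [← coe_stdBasis]; exact orthonormal_iff_ite.mp stdBasis.orthonormal a b

theorem inner_e_left (n : ℕ) (x : l2) : ⟪e n, x⟫_ℂ = x n := by
  simp [e, lp.inner_single_left]

-- `evenOddVec (inl a)` and `evenOddVec (inr a)` are the images of `e (2a)` and `e (2a+1)`.
noncomputable def evenOddVec : ℕ ⊕ ℕ → WithLp 2 (l2 × l2)
  | .inl a => ((-1 : ℂ) ^ a / Real.sqrt 2) • WithLp.toLp 2 (e a, e a)
  | .inr a => ((-1 : ℂ) ^ a / Real.sqrt 2) • WithLp.toLp 2 (e a, -e a)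

theorem neg_one_pow_div_sqrt_two_mul (a b : ℕ) :
    (-1 : ℂ) ^ b / Real.sqrt 2 * ((-1) ^ a / Real.sqrt 2) = (-1) ^ (a + b) / 2 := by
  have h2 : ((Real.sqrt 2 : ℝ) : ℂ) ^ 2 = 2 := by norm_cast; simp
  rw [div_mul_div_comm, ← sq, h2, pow_add, mul_comm]

theorem orthonormal_evenOddVec : Orthonormal ℂ evenOddVec := by
  rw [orthonormal_iff_ite]
  rintro (a | a) (b | b) <;>
    simp only [evenOddVec, WithLp.prod_inner_apply, inner_smul_left, inner_smul_right,
      inner_neg_left, inner_neg_right, neg_neg, add_neg_cancel, mul_zero, Complex.conj_ofReal, map_div₀, map_pow,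
      map_neg, map_one, inner_e_e, ← mul_assoc, neg_one_pow_div_sqrt_two_mul, Sum.inl.injEq,
      Sum.inr.injEq, reduceCtorEq, if_false]
  all_goals split_ifs with h <;> simp [h, ← two_mul]

theorem orthogonal_span_evenOddVec : (Submodule.span ℂ (Set.range evenOddVec))ᗮ = ⊥ := by
  refine (Submodule.eq_bot_iff _).2 fun w hw => ?_
  have h (i) : ⟪evenOddVec i, w⟫_ℂ = 0 :=
    Submodule.inner_right_of_mem_orthogonal (Submodule.subset_span (Set.mem_range_self i)) hw
  have hsum (a : ℕ) : w.fst a + w.snd a = 0 := by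
    simpa [evenOddVec, WithLp.prod_inner_apply, inner_smul_left, inner_e_left] using h (.inl a)
  have hdiff (a : ℕ) : w.fst a - w.snd a = 0 := by
    simpa [evenOddVec, WithLp.prod_inner_apply, inner_smul_left, inner_e_left, sub_eq_add_neg]
      using h (.inr a)
  have hfst : w.fst = 0 := by
    ext a
    simpa using (by linear_combination (hsum a + hdiff a) / 2 : w.fst a = 0)
  have hsnd : w.snd = 0 := by
    ext a
    simpa using (by linear_combination (hsum a - hdiff a) / 2 : w.snd a = 0)
  exact (WithLp.ext_iff 2).2 (Prod.ext hfst hsnd)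

noncomputable def evenOddBasis : HilbertBasis (ℕ ⊕ ℕ) ℂ (WithLp 2 (l2 × l2)) :=
  HilbertBasis.mkOfOrthogonalEqBot orthonormal_evenOddVec orthogonal_span_evenOddVec

theorem coe_evenOddBasis : ⇑evenOddBasis = evenOddVec :=
  HilbertBasis.coe_mkOfOrthogonalEqBot _ _

theorem inner_evenOddVec_withLpProdMap (m : ℕ) (H : l2 →L[ℂ] l2)
    (hH : ∀ k n : ℕ, ⟪H (e k), e n⟫_ℂ = ((1 / ((k : ℝ) + n + m + 3 / 2) : ℝ) : ℂ)) (i j : ℕ ⊕ ℕ) :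
    ⟪evenOddVec i, ((((-1 : ℝ) ^ (m + 1) / Real.pi : ℝ) : ℂ) • H).withLpProdMap 2
        ((((-1 : ℝ) ^ m / Real.pi : ℝ) : ℂ) • H) (evenOddVec j)⟫_ℂ =
      cCoef (Equiv.natSumNatEquivNat j + Equiv.natSumNatEquivNat i + 2 * m + 2) := by
  have hH' (k n : ℕ) : ⟪e n, H (e k)⟫_ℂ = ((1 / ((k : ℝ) + n + m + 3 / 2) : ℝ) : ℂ) := by
    rw [← inner_conj_symm, hH, Complex.conj_ofReal]
  rcases i with b | b <;> rcases j with a | a <;>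
    simp only [evenOddVec, Equiv.natSumNatEquivNat_apply, Sum.elim_inl, Sum.elim_inr, hH', map_smul,
      map_neg, ContinuousLinearMap.withLpProdMap_apply, WithLp.toLp_fst, WithLp.toLp_snd,
      FunLike.coe_smul, Pi.smul_apply, WithLp.prod_inner_apply, inner_smul_left, inner_smul_right,
      inner_neg_left, inner_neg_right, Complex.conj_ofReal, map_div₀, map_pow, map_one, ← mul_assoc,
      neg_one_pow_div_sqrt_two_mul]
  · rw [show 2 * a + 2 * b + 2 * m + 2 = 2 * (a + b + m + 1) by ring, cCoef_two_mul]
    push_cast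
    ring
  · rw [show 2 * a + 1 + 2 * b + 2 * m + 2 = 2 * (a + b + m + 1) + 1 by ring,
      cCoef_two_mul_add_one]
    push_cast
    field_simp
    ring
  · rw [show 2 * a + (2 * b + 1) + 2 * m + 2 = 2 * (a + b + m + 1) + 1 by ring,
      cCoef_two_mul_add_one]
    push_cast
    field_simp
    ring
  · rw [show 2 * a + 1 + (2 * b + 1) + 2 * m + 2 = 2 * (a + b + m + 2) by ring, cCoef_two_mul]
    push_cast
    ring

theorem stmt_12 (m : ℕ) (S H : l2 →L[ℂ] l2)
    (hS : ∀ k n : ℕ, @inner ℂ _ _ (S (e k)) (e n) = ((cCoef (k + n + 2 * m + 2) : ℝ) : ℂ))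
    (hH : ∀ k n : ℕ,
      @inner ℂ _ _ (H (e k)) (e n) = ((1 / ((k : ℝ) + n + m + 3 / 2) : ℝ) : ℂ)) :
    ∃ U : l2 ≃ₗᵢ[ℂ] WithLp 2 (l2 × l2),
      ∀ x : l2,
        WithLp.equiv 2 (l2 × l2) (U (S x)) =
          ((((-1 : ℝ) ^ (m + 1) / Real.pi : ℝ) : ℂ) • H ((WithLp.equiv 2 (l2 × l2) (U x)).1),
            (((-1 : ℝ) ^ m / Real.pi : ℝ) : ℂ) • H ((WithLp.equiv 2 (l2 × l2) (U x)).2)) := by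
  set b := stdBasis.reindex Equiv.natSumNatEquivNat.symm
  have hb : ⇑b = e ∘ Equiv.natSumNatEquivNat := by simp [b, coe_stdBasis]
  refine ⟨b.repr.trans evenOddBasis.repr.symm, fun x => ?_⟩
  refine congrArg (WithLp.equiv 2 _) (b.repr_trans_repr_symm_map_apply evenOddBasis (A := S)
    (B := ((((-1 : ℝ) ^ (m + 1) / Real.pi : ℝ) : ℂ) • H).withLpProdMap 2
      ((((-1 : ℝ) ^ m / Real.pi : ℝ) : ℂ) • H)) (fun i j => ?_) x)
  rw [hb, coe_evenOddBasis, inner_evenOddVec_withLpProdMap m H hH, Function.comp_apply,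
    Function.comp_apply, ← inner_conj_symm, hS, Complex.conj_ofReal]
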